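/- (Theorem 1, suboptimality bound for α < 1/2.) Let Q be an N×U real matrix with nonnegative entries, let Z_1,…,Z_M : ℝ^U → ℝ be monotone on componentwise-nonnegative vectors, and set D = Q̃(A_root) − Q̃(A_null) > 0. Let 0 ≤ α < 1/2. Let O be a finite nonempty set of M×N allocation matrices (entries 0 or 1) such that every M×N allocation matrix (entries 0 or 1) either belongs to O or is ≤ some element of O entrywise. Let TBO : O → ℝ satisfy TBO(P) ≤ 1 for all P ∈ O, and let Â be an M×N allocation matrix (entries 0 or 1) satisfying the greedy best-first condition: (1 − α)·f_NAC(Â) ≤ α·TBO(P) + (1 − α)·f_NAC(P) for every P ∈ O. Then for every M×N allocation matrix A* (entries 0 or 1), Q̃(A*) − Q̃(Â) ≤ (α / (1 − α))·D. -/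
import Mathlib


/-- A binary allocation matrix: every entry is 0 or 1. -/
def IsAlloc {M N : ℕ} (A : Matrix (Fin M) (Fin N) ℝ) : Prop :=
  ∀ i j, A i j = 0 ∨ A i j = 1

/-- A trait-efficacy map is monotone on componentwise-nonnegative vectors. -/
def MonotoneEff {U : ℕ} (Z : (Fin U → ℝ) → ℝ) : Prop :=
  ∀ x y : Fin U → ℝ, (∀ u, 0 ≤ x u) → (∀ u, 0 ≤ y u) → (∀ u, x u ≤ y u) → Z x ≤ Z y

/-- Total allocation efficacy: `Q̃(A) = ∑ m, Z m ((A ⬝ Q) m)`. -/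
noncomputable def totalEff {M N U : ℕ} (Q : Matrix (Fin N) (Fin U) ℝ)
    (Z : Fin M → (Fin U → ℝ) → ℝ) (A : Matrix (Fin M) (Fin N) ℝ) : ℝ :=
  ∑ m, Z m ((A * Q) m)

/-- The all-ones (root) allocation. -/
def Aroot (M N : ℕ) : Matrix (Fin M) (Fin N) ℝ := fun _ _ => 1

/-- The all-zeros (null) allocation. -/
def Anull (M N : ℕ) : Matrix (Fin M) (Fin N) ℝ := fun _ _ => 0

/-- Normalized Allocation Cost. -/
noncomputable def fNAC {M N U : ℕ} (Q : Matrix (Fin N) (Fin U) ℝ)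
    (Z : Fin M → (Fin U → ℝ) → ℝ) (A : Matrix (Fin M) (Fin N) ℝ) : ℝ :=
  (totalEff Q Z (Aroot M N) - totalEff Q Z A) /
    (totalEff Q Z (Aroot M N) - totalEff Q Z (Anull M N))


lemma alloc_nonneg {M N : ℕ} {A : Matrix (Fin M) (Fin N) ℝ} (h : IsAlloc A) :
    ∀ i j, 0 ≤ A i j := by
  intro i j; rcases h i j with h' | h' <;> simp [h']

lemma alloc_le_one {M N : ℕ} {A : Matrix (Fin M) (Fin N) ℝ} (h : IsAlloc A) :
    ∀ i j, A i j ≤ 1 := by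
  intro i j; rcases h i j with h' | h' <;> simp [h']

lemma totalEff_mono {M N U : ℕ} (Q : Matrix (Fin N) (Fin U) ℝ) (hQ : ∀ i u, 0 ≤ Q i u)
    (Z : Fin M → (Fin U → ℝ) → ℝ) (hZ : ∀ m, MonotoneEff (Z m))
    {A B : Matrix (Fin M) (Fin N) ℝ} (hA : ∀ i j, 0 ≤ A i j) (hB : ∀ i j, 0 ≤ B i j)
    (hAB : ∀ i j, A i j ≤ B i j) :
    totalEff Q Z A ≤ totalEff Q Z B := by
  unfold totalEff
  apply Finset.sum_le_sum
  intro m _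
  apply hZ m
  · intro u
    simp only [Matrix.mul_apply]
    exact Finset.sum_nonneg fun j _ => mul_nonneg (hA m j) (hQ j u)
  · intro u
    simp only [Matrix.mul_apply]
    exact Finset.sum_nonneg fun j _ => mul_nonneg (hB m j) (hQ j u)
  · intro u
    simp only [Matrix.mul_apply]
    exact Finset.sum_le_sum fun j _ => mul_le_mul_of_nonneg_right (hAB m j) (hQ j u)

theorem eitags_suboptimality_bound {M N U : ℕ}
    (Q : Matrix (Fin N) (Fin U) ℝ) (hQ : ∀ i u, 0 ≤ Q i u)
    (Z : Fin M → (Fin U → ℝ) → ℝ) (hZ : ∀ m, MonotoneEff (Z m))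
    (D : ℝ) (hDdef : D = totalEff Q Z (Aroot M N) - totalEff Q Z (Anull M N))
    (hD : 0 < D)
    (α : ℝ) (hα0 : 0 ≤ α) (hα : α < 1 / 2)
    (Op : Finset (Matrix (Fin M) (Fin N) ℝ)) (hOp : Op.Nonempty)
    (hOpAlloc : ∀ P ∈ Op, IsAlloc P)
    (hcover : ∀ A : Matrix (Fin M) (Fin N) ℝ, IsAlloc A →
      A ∈ Op ∨ ∃ P ∈ Op, ∀ i j, A i j ≤ P i j)
    (TBO : Matrix (Fin M) (Fin N) ℝ → ℝ) (hTBO : ∀ P ∈ Op, TBO P ≤ 1)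
    (Ahat : Matrix (Fin M) (Fin N) ℝ) (hAhat : IsAlloc Ahat)
    (hgreedy : ∀ P ∈ Op,
      (1 - α) * fNAC Q Z Ahat ≤ α * TBO P + (1 - α) * fNAC Q Z P)
    (Astar : Matrix (Fin M) (Fin N) ℝ) (hAstar : IsAlloc Astar) :
    totalEff Q Z Astar - totalEff Q Z Ahat ≤ (α / (1 - α)) * D := by
  have h1α : (0:ℝ) < 1 - α := by linarith
  -- find P ∈ Op dominating Astar
  obtain ⟨P, hPOp, hPge⟩ : ∃ P ∈ Op, totalEff Q Z Astar ≤ totalEff Q Z P := by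
    rcases hcover Astar hAstar with h | ⟨P, hP, hle⟩
    · exact ⟨Astar, h, le_refl _⟩
    · exact ⟨P, hP, totalEff_mono Q hQ Z hZ (alloc_nonneg hAstar)
        (alloc_nonneg (hOpAlloc P hP)) hle⟩
  have hg := hgreedy P hPOp
  have htbo := hTBO P hPOp
  unfold fNAC at hg
  rw [← hDdef] at hg
  have hne : D ≠ 0 := ne_of_gt hD
  -- (1-α) * ((R - Ahat)/D) ≤ α * TBO P + (1-α) * ((R - P)/D)
  have key : (1 - α) * (totalEff Q Z (Aroot M N) - totalEff Q Z Ahat)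
      ≤ α * D + (1 - α) * (totalEff Q Z (Aroot M N) - totalEff Q Z P) := by
    have h2 : (1 - α) * ((totalEff Q Z (Aroot M N) - totalEff Q Z Ahat) / D)
        ≤ α * 1 + (1 - α) * ((totalEff Q Z (Aroot M N) - totalEff Q Z P) / D) := by
      calc (1 - α) * ((totalEff Q Z (Aroot M N) - totalEff Q Z Ahat) / D)
          ≤ α * TBO P + (1 - α) * ((totalEff Q Z (Aroot M N) - totalEff Q Z P) / D) := hg
        _ ≤ α * 1 + (1 - α) * ((totalEff Q Z (Aroot M N) - totalEff Q Z P) / D) := by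
            nlinarith
    have h3 := mul_le_mul_of_nonneg_right h2 (le_of_lt hD)
    field_simp at h3
    nlinarith [h3]
  have h4 : (1 - α) * (totalEff Q Z P - totalEff Q Z Ahat) ≤ α * D := by nlinarith
  rw [div_mul_eq_mul_div, le_div_iff₀ h1α]
  nlinarith
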